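/- arXiv:1304.0394 — 2 statements merged into one kernel-verified Lean document; each statement's English description precedes it below -/
import Mathlib

section
/- Let A be a finite-dimensional normed unital ℝ-algebra, k a natural number, and N a two-sided ideal of A with N^{k+1} = 0. Let ψ : ℝ → A be continuous with ψ(t) ∈ N for all t, and let Ψ : ℝ → A be differentiable with Ψ'(t) = ψ(t) * Ψ(t) for all t and Ψ(0) = 1. Then Ψ(t) − 1 ∈ N for all t ∈ ℝ; in particular each Ψ(t) is a unit of A. -/
/-- If `Ψ` solves `Ψ' = ψ * Ψ`, `Ψ(0) = 1`, with `ψ` taking values in a two-sided ideal `N`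
satisfying `N^(k+1) = 0` (every product of `k+1` elements of `N` vanishes), then
`Ψ(t) - 1 ∈ N` for all `t`; in particular each `Ψ(t)` is a unit. -/
theorem solution_of_nilpotent_linear_ode_is_unipotent
    (A : Type*) [NormedRing A] [NormedAlgebra ℝ A] [FiniteDimensional ℝ A]
    (k : ℕ) (N : TwoSidedIdeal A)
    (hNk : ∀ a : Fin (k + 1) → A, (∀ i, a i ∈ N) → (List.ofFn a).prod = 0)
    (ψ : ℝ → A) (hψc : Continuous ψ) (hψN : ∀ t, ψ t ∈ N)
    (Ψ : ℝ → A) (hΨ : ∀ t, HasDerivAt Ψ (ψ t * Ψ t) t) (hΨ0 : Ψ 0 = 1) :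
    ∀ t : ℝ, Ψ t - 1 ∈ N ∧ IsUnit (Ψ t) := by
  -- view N as an ℝ-submodule
  set S : Submodule ℝ A :=
    { carrier := {x | x ∈ N}
      add_mem' := fun h1 h2 => N.add_mem h1 h2
      zero_mem' := N.zero_mem
      smul_mem' := fun r x hx => by
        simpa [Algebra.smul_def] using N.mul_mem_left _ _ hx } with hS
  have hΨc : Continuous Ψ := by
    rw [continuous_iff_continuousAt]
    exact fun t => (hΨ t).continuousAt
  have hfc : Continuous fun s => ψ s * Ψ s := hψc.mul hΨc
  have hmem : ∀ t : ℝ, Ψ t - 1 ∈ N := by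
    intro t
    have hint : IntervalIntegrable (fun s => ψ s * Ψ s) MeasureTheory.volume 0 t :=
      hfc.intervalIntegrable 0 t
    have heq : ∫ s in (0:ℝ)..t, ψ s * Ψ s = Ψ t - 1 := by
      have := intervalIntegral.integral_eq_sub_of_hasDerivAt
        (fun s _ => hΨ s) hint
      rwa [hΨ0] at this
    haveI : IsClosed (S : Set A) := S.closed_of_finiteDimensional
    let π : A →L[ℝ] (A ⧸ S) := ⟨S.mkQ, S.mkQ.continuous_of_finiteDimensional⟩
    have hπ : π (Ψ t - 1) = 0 := by
      rw [← heq, ← π.intervalIntegral_comp_comm hint]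
      have : (fun s => π (ψ s * Ψ s)) = fun _ => 0 := by
        funext s
        show S.mkQ (ψ s * Ψ s) = 0
        rw [Submodule.mkQ_apply, Submodule.Quotient.mk_eq_zero]
        exact N.mul_mem_right _ _ (hψN s)
      rw [this]
      simp
    have : S.mkQ (Ψ t - 1) = 0 := hπ
    rwa [Submodule.mkQ_apply, Submodule.Quotient.mk_eq_zero] at this
  intro t
  refine ⟨hmem t, ?_⟩
  have hnil : IsNilpotent (Ψ t - 1) := by
    refine ⟨k + 1, ?_⟩
    have := hNk (fun _ => Ψ t - 1) (fun _ => hmem t)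
    simpa [List.ofFn_const, List.prod_replicate, pow_succ'] using this
  have := hnil.isUnit_one_add
  rwa [add_sub_cancel] at this
end

section
/- Let A be a finite-dimensional normed commutative unital ℝ-algebra. Let ψ : ℝ → (A →ₗ[ℝ] A) be a continuous curve of linear endomorphisms such that each ψ(t) is a derivation, i.e. ψ(t)(a*b) = a * ψ(t)(b) + ψ(t)(a) * b for all a, b ∈ A. Let Ψ : ℝ → (A →ₗ[ℝ] A) be differentiable with Ψ'(t) = ψ(t) ∘ Ψ(t) for all t and Ψ(0) = id. Then for every t, Ψ(t)(1) = 1 and Ψ(t)(a*b) = Ψ(t)(a) * Ψ(t)(b) for all a, b ∈ A; i.e., each Ψ(t) is an algebra endomorphism of A. -/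
open Set

/-- Uniqueness for the linear ODE `x' = ψ t x` on all of `ℝ`. -/
lemma linear_ODE_unique {A : Type*} [NormedAddCommGroup A] [NormedSpace ℝ A]
    (ψ : ℝ → (A →L[ℝ] A)) (hψc : Continuous ψ)
    (f g : ℝ → A)
    (hf : ∀ t, HasDerivAt f (ψ t (f t)) t)
    (hg : ∀ t, HasDerivAt g (ψ t (g t)) t)
    (h0 : f 0 = g 0) : ∀ t, f t = g t := by
  intro T
  set R : ℝ := |T| + 1 with hR
  have hR0 : (0 : ℝ) < R := by positivity
  have hTm : T ∈ Icc (-R) R := by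
    constructor <;> [linarith [neg_abs_le T]; linarith [le_abs_self T]]
  -- bound on ‖ψ s‖ on the compact interval
  obtain ⟨M, hM⟩ : ∃ M, ∀ s ∈ Icc (-R) R, ‖ψ s‖ ≤ M := by
    obtain ⟨M, hM⟩ := (isCompact_Icc (a := -R) (b := R)).exists_bound_of_continuousOn
      (hψc.norm.continuousOn)
    exact ⟨M, fun s hs => by simpa using hM s hs⟩
  have hM0 : 0 ≤ M := le_trans (norm_nonneg _) (hM 0 ⟨by linarith, by linarith⟩)
  -- clamp time
  let c : ℝ → ℝ := fun s => max (-R) (min R s)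
  have hc_mem : ∀ s, c s ∈ Icc (-R) R := fun s =>
    ⟨le_max_left _ _, max_le (by linarith) (min_le_left _ _)⟩
  have hc_id : ∀ s ∈ Ioo (-R) R, c s = s := by
    intro s hs
    have : min R s = s := min_eq_right hs.2.le
    simp only [c, this]
    exact max_eq_right hs.1.le
  let v : ℝ → A → A := fun s x => ψ (c s) x
  have hv : ∀ s, LipschitzOnWith M.toNNReal (v s) univ := by
    intro s
    apply LipschitzWith.lipschitzOnWith
    refine LipschitzWith.weaken ((ψ (c s)).lipschitz) ?_
    rw [← NNReal.coe_le_coe]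
    simpa [Real.coe_toNNReal M hM0] using hM _ (hc_mem s)
  have h0mem : (0 : ℝ) ∈ Ioo (-R) R := ⟨by linarith, hR0⟩
  have key : EqOn f g (Icc (-R) R) := by
    refine ODE_solution_unique_of_mem_Icc (v := v) (s := fun _ => univ) (fun t _ => hv t) h0mem
      ?_ ?_ (fun _ _ => mem_univ _) ?_ ?_ (fun _ _ => mem_univ _) h0
    · exact fun t _ => (hf t).continuousAt.continuousWithinAt
    · intro t ht
      simpa [v, hc_id t ht] using hf t
    · exact fun t _ => (hg t).continuousAt.continuousWithinAt
    · intro t ht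
      simpa [v, hc_id t ht] using hg t
  exact key hTm

/-- If `Ψ` solves the Cauchy problem `Ψ' = ψ ∘ Ψ`, `Ψ(0) = id`, where each `ψ(t)` is a
derivation of the finite-dimensional normed commutative ℝ-algebra `A`, then each `Ψ(t)` is
an algebra endomorphism of `A`. -/
theorem solution_of_derivation_valued_ode_is_algebra_endomorphism
    (A : Type*) [NormedCommRing A] [NormedAlgebra ℝ A] [FiniteDimensional ℝ A]
    (ψ : ℝ → (A →L[ℝ] A)) (hψc : Continuous ψ)
    (hψder : ∀ t, ∀ a b : A, ψ t (a * b) = a * ψ t b + ψ t a * b)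
    (Ψ : ℝ → (A →L[ℝ] A))
    (hΨ : ∀ t, HasDerivAt Ψ ((ψ t).comp (Ψ t)) t)
    (hΨ0 : Ψ 0 = ContinuousLinearMap.id ℝ A) :
    ∀ t, Ψ t 1 = 1 ∧ ∀ a b : A, Ψ t (a * b) = Ψ t a * Ψ t b := by
  have hψ1 : ∀ t, ψ t 1 = 0 := by
    intro t
    have := hψder t 1 1
    simp only [one_mul, mul_one] at this
    exact add_eq_right.mp this.symm
  have happ : ∀ (a : A) t, HasDerivAt (fun s => Ψ s a) (ψ t (Ψ t a)) t := by
    intro a t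
    have := (hΨ t).clm_apply (hasDerivAt_const t a)
    simpa using this
  intro t
  constructor
  · -- Ψ t 1 = 1
    have := linear_ODE_unique ψ hψc (fun s => Ψ s 1) (fun _ => 1)
      (happ 1) (fun s => by simpa [hψ1 s] using hasDerivAt_const s (1 : A))
      (by simp [hΨ0])
    exact this t
  · intro a b
    have hg : ∀ s, HasDerivAt (fun u => Ψ u a * Ψ u b)
        (ψ s (Ψ s a * Ψ s b)) s := by
      intro s
      have := (happ a s).mul (happ b s)
      have hrw : ψ s (Ψ s a) * Ψ s b + Ψ s a * ψ s (Ψ s b) = ψ s (Ψ s a * Ψ s b) := by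
        rw [hψder s (Ψ s a) (Ψ s b)]; ring
      rwa [hrw] at this
    have := linear_ODE_unique ψ hψc (fun s => Ψ s (a * b)) (fun s => Ψ s a * Ψ s b)
      (happ (a * b)) hg (by simp [hΨ0])
    exact this t
end
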